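/- Let (a,p) be a truthful mechanism with finite approximation ratio ρ. If, on cost matrix A1, the mechanism allocates proper task n+2 to machine 1 but does not allocate proper task n+1 to machine 1, then ρ ≥ 1 + min{ r^{-1}, a }. -/

import Mathlib

open scoped ENNReal BigOperators

/-- A feasible allocation of `m` tasks to `n` machines: a 0-1 matrix (represented as a
`Bool`-valued matrix) in which every task is assigned to exactly one machine. -/
structure Alloc (n m : ℕ) where
  assign : Fin n → Fin m → Bool
  feasible : ∀ j : Fin m, ∃! i : Fin n, assign i j = true

/-- The total processing cost incurred by machine `i` under allocation `A`
when her (true) cost row is `ti`. -/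
noncomputable def machineCost {n m : ℕ} (A : Alloc n m) (ti : Fin m → ℝ≥0∞) (i : Fin n) :
    ℝ≥0∞ :=
  ∑ j : Fin m, if A.assign i j then ti j else 0

/-- A deterministic (direct-revelation) mechanism: an allocation rule together with a
payment rule. -/
structure Mechanism (n m : ℕ) where
  alloc : (Fin n → Fin m → ℝ≥0∞) → Alloc n m
  pay : (Fin n → Fin m → ℝ≥0∞) → Fin n → ℝ

/-- The (quasi-linear) utility of machine `i` when the reported cost matrix is `t` and her
true cost row is `trueRow`: her payment minus her incurred true cost, in the extended reals. -/
noncomputable def utility {n m : ℕ} (M : Mechanism n m) (t : Fin n → Fin m → ℝ≥0∞)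
    (trueRow : Fin m → ℝ≥0∞) (i : Fin n) : EReal :=
  (M.pay t i : EReal) - ((machineCost (M.alloc t) trueRow i : ℝ≥0∞) : EReal)

/-- Truthfulness: no machine can strictly increase her utility by misreporting her row,
whatever the (fixed) reports of the other machines are. -/
def Truthful {n m : ℕ} (M : Mechanism n m) : Prop :=
  ∀ (t : Fin n → Fin m → ℝ≥0∞) (i : Fin n) (ti' : Fin m → ℝ≥0∞),
    utility M (Function.update t i ti') (t i) i ≤ utility M t (t i) i

/-- The makespan of allocation `A` on cost matrix `t`. -/
noncomputable def makespan {n m : ℕ} (A : Alloc n m) (t : Fin n → Fin m → ℝ≥0∞) : ℝ≥0∞ :=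
  ⨆ i : Fin n, machineCost A (t i) i

/-- The optimal makespan on cost matrix `t`. -/
noncomputable def optMakespan (n m : ℕ) (t : Fin n → Fin m → ℝ≥0∞) : ℝ≥0∞ :=
  ⨅ A : Alloc n m, makespan A t

/-- The mechanism `M` has approximation ratio (at most) `ρ`. -/
def ApproxRatioLE {n m : ℕ} (M : Mechanism n m) (ρ : ℝ) : Prop :=
  1 ≤ ρ ∧ ∀ t : Fin n → Fin m → ℝ≥0∞,
    makespan (M.alloc t) t ≤ ENNReal.ofReal ρ * optMakespan n m t

/-- The cost matrix `A0` on `n` machines and `2n-1` tasks. Tasks with index `< n` (0-based)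
are the dummy tasks: machine `i` has cost `0` on dummy task `i` and `∞` on the other dummy
tasks. Tasks with index `n, n+1, …, 2n-2` (0-based) are the proper tasks `n+1, …, 2n-1` of
the paper: machines `1` and `2` (indices `0`, `1`) have cost `1` on task `n+1` (index `n`)
and cost `a^{-(j-2)}` on task `n+j` (index `n+j-1`) for `j = 2,…,n-1`; machine `i`
(index `i-1 ≥ 2`), for `3 ≤ i ≤ n`, has cost `a^{-(i-3)}` on task `n+i-1` (index `n+i-2`)
and `∞` on every other proper task. -/
noncomputable def A0 (n : ℕ) (a : ℝ) : Fin n → Fin (2 * n - 1) → ℝ≥0∞ := fun i j =>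
  if (j : ℕ) < n then
    (if (j : ℕ) = (i : ℕ) then 0 else ⊤)
  else if (i : ℕ) ≤ 1 then
    (if (j : ℕ) = n then 1 else ENNReal.ofReal (a⁻¹ ^ ((j : ℕ) - n - 1)))
  else
    (if (j : ℕ) = n + (i : ℕ) - 1 then ENNReal.ofReal (a⁻¹ ^ ((j : ℕ) - n - 1)) else ⊤)

/-- The cost matrix `A1`: identical to `A0` except for machine `1`'s (index `0`'s) costs on
the proper tasks, which become `r` on task `n+1` (index `n`) and `a^{-(j-1)}` on task `n+j`
(index `n+j-1`) for `j = 2,…,n-1`. -/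
noncomputable def A1 (n : ℕ) (r a : ℝ) : Fin n → Fin (2 * n - 1) → ℝ≥0∞ := fun i j =>
  if (i : ℕ) = 0 ∧ n ≤ (j : ℕ) then
    (if (j : ℕ) = n then ENNReal.ofReal r else ENNReal.ofReal (a⁻¹ ^ ((j : ℕ) - n)))
  else A0 n a i j

/-!
Paper numbering (machines `1, …, n`, tasks `1, …, 2n-1`); in the code both are 0-based.
Put `μ = max r a⁻¹`, so that `μ⁻¹ = min r⁻¹ a`, and let `0 < ε < a⁻¹`.

In `A1` machine 1 gets task `n+2` but not task `n+1`. Let it raise its cost on task `n+1` to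
`r + ε` and lower the one on task `n+2` to `ε` (matrix `A2`): by weak monotonicity it still does
not get task `n+1`, which therefore goes to machine 2, the only other machine with finite cost
on it. Now let machine 2 raise its cost on its dummy task from `0` to `μ` and lower the one on
task `n+1` to `1 - ε` (matrix `A3`). It must keep its dummy task, and weak monotonicity keeps
task `n+1` with it as well, so the mechanism's makespan on `A3` is at least `μ + 1 - ε`.
On the other hand, giving tasks `n+1, n+2` to machine 1 and every other proper task to the
only machine that can do it costs at most `μ + 2ε`. Letting `ε → 0` gives `ρ μ ≥ 1 + μ`.
-/

section

open Finset Function Filter Topology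

namespace Alloc

variable {n m : ℕ}

def ofFun (σ : Fin m → Fin n) : Alloc n m where
  assign i j := decide (σ j = i)
  feasible j := ⟨σ j, by simp, fun i h => (of_decide_eq_true h).symm⟩

theorem machineCost_ne_top_iff {A : Alloc n m} {ti : Fin m → ℝ≥0∞} {i : Fin n} :
    machineCost A ti i ≠ ⊤ ↔ ∀ j, A.assign i j = true → ti j ≠ ⊤ :=
  ENNReal.sum_ne_top.trans <| forall_congr' fun j => by cases A.assign i j <;> simp

theorem add_le_machineCost {A : Alloc n m} {ti : Fin m → ℝ≥0∞} {i : Fin n} {j₁ j₂ : Fin m}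
    (hne : j₁ ≠ j₂) (h₁ : A.assign i j₁ = true) (h₂ : A.assign i j₂ = true) :
    ti j₁ + ti j₂ ≤ machineCost A ti i := by
  simpa [machineCost, sum_pair hne, h₁, h₂] using sum_le_sum_of_subset (subset_univ {j₁, j₂})
    (f := fun j => if A.assign i j then ti j else 0)

theorem machineCost_le_makespan (A : Alloc n m) (t : Fin n → Fin m → ℝ≥0∞) (i : Fin n) :
    machineCost A (t i) i ≤ makespan A t :=
  le_iSup (fun i => machineCost A (t i) i) i

theorem machineCost_ne_top_of_makespan_ne_top {A : Alloc n m} {t : Fin n → Fin m → ℝ≥0∞}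
    (h : makespan A t ≠ ⊤) (i : Fin n) : machineCost A (t i) i ≠ ⊤ :=
  ne_top_of_le_ne_top h (machineCost_le_makespan A t i)

theorem ne_top_of_makespan_ne_top {A : Alloc n m} {t : Fin n → Fin m → ℝ≥0∞} {i : Fin n}
    {j : Fin m} (h : makespan A t ≠ ⊤) (hij : A.assign i j = true) : t i j ≠ ⊤ :=
  machineCost_ne_top_iff.1 (machineCost_ne_top_of_makespan_ne_top h i) j hij

theorem assign_of_forall_ne_top {A : Alloc n m} {t : Fin n → Fin m → ℝ≥0∞} {i : Fin n}
    {j : Fin m} (h : makespan A t ≠ ⊤) (hi : ∀ k, A.assign k j = true → t k j ≠ ⊤ → k = i) :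
    A.assign i j = true := by
  obtain ⟨k, hk, -⟩ := A.feasible j
  rwa [← hi k hk (ne_top_of_makespan_ne_top h hk)]

theorem assign_of_forall_ne_eq_top {A : Alloc n m} {t : Fin n → Fin m → ℝ≥0∞} {i : Fin n}
    {j : Fin m} (h : makespan A t ≠ ⊤) (htop : ∀ k ≠ i, t k j = ⊤) : A.assign i j = true :=
  assign_of_forall_ne_top h fun k _ hk => not_not.1 fun hki => hk (htop k hki)

theorem makespan_ofFun_ne_top {σ : Fin m → Fin n} {t : Fin n → Fin m → ℝ≥0∞}
    (h : ∀ j, t (σ j) j ≠ ⊤) : makespan (ofFun σ) t ≠ ⊤ :=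
  iSup_ne_top fun i => machineCost_ne_top_iff.2 fun j hj => by
    rw [← of_decide_eq_true hj]; exact h j

theorem machineCost_ofFun_le {σ : Fin m → Fin n} {ti : Fin m → ℝ≥0∞} {i : Fin n}
    (s : Finset (Fin m)) (hs : ∀ j, σ j = i → j ∈ s) :
    machineCost (ofFun σ) ti i ≤ ∑ j ∈ s, ti j := by
  rw [machineCost, ← sum_subset (subset_univ s) fun j _ hj => by simp [ofFun, mt (hs j) hj]]
  exact sum_le_sum fun j _ => by split <;> simp

theorem toReal_machineCost {A : Alloc n m} {ti : Fin m → ℝ≥0∞} {i : Fin n}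
    (h : machineCost A ti i ≠ ⊤) :
    (machineCost A ti i).toReal = ∑ j, if A.assign i j then (ti j).toReal else 0 := by
  rw [machineCost, ENNReal.toReal_sum fun j _ => ?_]
  · exact sum_congr rfl fun j _ => by split <;> simp
  · have := machineCost_ne_top_iff.1 h j
    split <;> simp_all

theorem machineCost_ne_top_of_eqOn {A : Alloc n m} {u v : Fin m → ℝ≥0∞} {i : Fin n}
    {S : Finset (Fin m)} (huv : ∀ j ∉ S, u j = v j) (hu : machineCost A u i ≠ ⊤)
    (hv : ∀ j ∈ S, v j ≠ ⊤) : machineCost A v i ≠ ⊤ := by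
  refine machineCost_ne_top_iff.2 fun j hj => ?_
  by_cases hjS : j ∈ S
  · exact hv j hjS
  · rw [← huv j hjS]; exact machineCost_ne_top_iff.1 hu j hj

end Alloc

namespace ApproxRatioLE

variable {n m : ℕ} {M : Mechanism n m} {ρ : ℝ} {t : Fin n → Fin m → ℝ≥0∞}

theorem makespan_le (hρ : ApproxRatioLE M ρ) (A : Alloc n m) {C : ℝ≥0∞}
    (hA : makespan A t ≤ C) : makespan (M.alloc t) t ≤ ENNReal.ofReal ρ * C :=
  (hρ.2 t).trans (mul_le_mul_right ((iInf_le _ A).trans hA) _)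

theorem makespan_ne_top (hρ : ApproxRatioLE M ρ) (A : Alloc n m) (hA : makespan A t ≠ ⊤) :
    makespan (M.alloc t) t ≠ ⊤ :=
  ne_top_of_le_ne_top (ENNReal.mul_ne_top ENNReal.ofReal_ne_top hA) (hρ.makespan_le A le_rfl)

end ApproxRatioLE

section WeakMonotonicity

variable {n m : ℕ} {M : Mechanism n m}

theorem utility_eq_coe {t : Fin n → Fin m → ℝ≥0∞} {row : Fin m → ℝ≥0∞} {i : Fin n}
    (h : machineCost (M.alloc t) row i ≠ ⊤) :
    utility M t row i = ((M.pay t i - (machineCost (M.alloc t) row i).toReal : ℝ) : EReal) := by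
  rw [utility, EReal.coe_sub, EReal.coe_ennreal_toReal h]

-- Add the truthfulness inequalities for the deviations `t i → t' i` and `t' i → t i`:
-- the payments cancel.
theorem Truthful.weak_monotonicity (hM : Truthful M) {t t' : Fin n → Fin m → ℝ≥0∞} {i : Fin n}
    (hrow : ∀ k ≠ i, t' k = t k) (S : Finset (Fin m)) (hoff : ∀ j ∉ S, t' i j = t i j)
    (hS : ∀ j ∈ S, t i j ≠ ⊤ ∧ t' i j ≠ ⊤)
    (h : machineCost (M.alloc t) (t i) i ≠ ⊤) (h' : machineCost (M.alloc t') (t' i) i ≠ ⊤) :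
    ∑ j ∈ S, ((if (M.alloc t).assign i j then 1 else 0)
        - (if (M.alloc t').assign i j then 1 else 0)) * ((t i j).toReal - (t' i j).toReal)
      ≤ 0 := by
  have h₂ := Alloc.machineCost_ne_top_of_eqOn hoff h' fun j hj => (hS j hj).1
  have h₃ :=
    Alloc.machineCost_ne_top_of_eqOn (fun j hj => (hoff j hj).symm) h fun j hj => (hS j hj).2
  have u₁ := hM t i (t' i)
  have u₂ := hM t' i (t i)
  rw [← eq_update_iff.2 ⟨rfl, hrow⟩] at u₁
  rw [← eq_update_iff.2 ⟨rfl, fun k hk => (hrow k hk).symm⟩] at u₂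
  rw [utility_eq_coe h, utility_eq_coe h₂, EReal.coe_le_coe_iff] at u₁
  rw [utility_eq_coe h', utility_eq_coe h₃, EReal.coe_le_coe_iff] at u₂
  rw [Alloc.toReal_machineCost h, Alloc.toReal_machineCost h', Alloc.toReal_machineCost h₂,
    Alloc.toReal_machineCost h₃] at *
  rw [sum_subset (subset_univ S) fun j _ hj => by rw [hoff j hj, sub_self, mul_zero]]
  have hterm : ∀ (x x' : Bool) (c c' : ℝ),
      ((if x then 1 else 0) - (if x' then 1 else 0)) * (c - c')
        = (if x then c else 0) + (if x' then c' else 0) - (if x' then c else 0)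
          - (if x then c' else 0) := by
    intro x x' c c'; cases x <;> cases x' <;> simp
  simp only [hterm, sum_sub_distrib, sum_add_distrib]
  linarith

end WeakMonotonicity

theorem le_of_forall_Ioo_le_add_mul {x y c δ : ℝ} (hδ : 0 < δ)
    (h : ∀ ε ∈ Set.Ioo 0 δ, x ≤ y + c * ε) : x ≤ y := by
  have hcont : Continuous fun ε : ℝ => y + c * ε := by fun_prop
  have hlim : Tendsto (fun ε => y + c * ε) (𝓝[>] 0) (𝓝 y) := by
    simpa using (hcont.tendsto 0).mono_left nhdsWithin_le_nhds
  exact ge_of_tendsto hlim (eventually_of_mem (Ioo_mem_nhdsGT hδ) h)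

namespace CaseThree

noncomputable def A2 (n : ℕ) (r a ε : ℝ) : Fin n → Fin (2 * n - 1) → ℝ≥0∞ := fun i j =>
  if (i : ℕ) = 0 ∧ (j : ℕ) = n then ENNReal.ofReal (r + ε)
  else if (i : ℕ) = 0 ∧ (j : ℕ) = n + 1 then ENNReal.ofReal ε
  else A1 n r a i j

noncomputable def A3 (n : ℕ) (r a ε μ : ℝ) : Fin n → Fin (2 * n - 1) → ℝ≥0∞ := fun i j =>
  if (i : ℕ) = 1 ∧ (j : ℕ) = 1 then ENNReal.ofReal μ
  else if (i : ℕ) = 1 ∧ (j : ℕ) = n then ENNReal.ofReal (1 - ε)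
  else A2 n r a ε i j

def schedule (n : ℕ) (j : Fin (2 * n - 1)) : Fin n :=
  ⟨if (j : ℕ) < n then j else if (j : ℕ) ≤ n + 1 then 0 else j - n + 1, by
    have := j.isLt; split_ifs <;> omega⟩

variable {n : ℕ}

theorem val_eq_of_schedule_eq {i : Fin n} {j : Fin (2 * n - 1)} (h : schedule n j = i) :
    (j : ℕ) = i ∨ (i : ℕ) = 0 ∧ ((j : ℕ) = n ∨ (j : ℕ) = n + 1) ∨
      3 ≤ (i : ℕ) ∧ (j : ℕ) = n + i - 1 := by
  have := j.isLt
  have h := congrArg Fin.val h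
  simp only [schedule] at h
  split_ifs at h <;> omega

theorem A1_schedule_ne_top (r a : ℝ) (j : Fin (2 * n - 1)) :
    A1 n r a (schedule n j) j ≠ ⊤ := by
  have := j.isLt
  simp only [A1, A0, schedule]
  split_ifs <;> first | omega | simp

theorem A2_schedule_ne_top (r a ε : ℝ) (j : Fin (2 * n - 1)) :
    A2 n r a ε (schedule n j) j ≠ ⊤ := by
  have := j.isLt
  simp only [A2, A1, A0, schedule]
  split_ifs <;> first | omega | simp

variable {r a ε μ : ℝ}

theorem makespan_schedule_A3_le (hn : 2 < n) (ha : 1 < a) (hr : 0 ≤ r) (hε : 0 ≤ ε)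
    (hrμ : r ≤ μ) (haμ : a⁻¹ ≤ μ) :
    makespan (Alloc.ofFun (schedule n)) (A3 n r a ε μ) ≤ ENNReal.ofReal (μ + 2 * ε) := by
  refine iSup_le fun i => ?_
  have hi := i.isLt
  have hμ : 0 ≤ μ := (inv_nonneg.2 (by linarith)).trans haμ
  rcases (by omega : (i : ℕ) = 0 ∨ ((i : ℕ) = 1 ∨ (i : ℕ) = 2) ∨ 3 ≤ (i : ℕ)) with h0 | h12 | h3
  · refine (Alloc.machineCost_ofFun_le {⟨0, by omega⟩, ⟨n, by omega⟩, ⟨n + 1, by omega⟩}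
      fun j hj => by have := val_eq_of_schedule_eq hj; simp [Fin.ext_iff]; omega).trans ?_
    rw [sum_insert (by simp [Fin.ext_iff]; omega), sum_insert (by simp [Fin.ext_iff]),
      sum_singleton]
    calc _ = ENNReal.ofReal (r + ε) + ENNReal.ofReal ε := by
          simp [A3, A2, A1, A0, h0, show n ≠ 0 by omega, show ¬0 = n by omega]
      _ = ENNReal.ofReal (r + ε + ε) := (ENNReal.ofReal_add (by linarith) hε).symm
      _ ≤ _ := ENNReal.ofReal_le_ofReal (by linarith)
  · refine (Alloc.machineCost_ofFun_le {⟨i, by omega⟩}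
      fun j hj => by have := val_eq_of_schedule_eq hj; simp [Fin.ext_iff]; omega).trans ?_
    rw [sum_singleton]
    simp only [A3, A2, A1, A0]
    split_ifs <;> first | omega | exact zero_le | exact ENNReal.ofReal_le_ofReal (by linarith)
  · refine (Alloc.machineCost_ofFun_le {⟨i, by omega⟩, ⟨n + i - 1, by omega⟩}
      fun j hj => by have := val_eq_of_schedule_eq hj; simp [Fin.ext_iff]; omega).trans ?_
    rw [sum_pair (by simp [Fin.ext_iff]; omega)]
    calc _ = ENNReal.ofReal (a⁻¹ ^ ((i : ℕ) - 2)) := by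
          simp [A3, A2, A1, A0, show (i : ℕ) ≠ 0 by omega, show (i : ℕ) ≠ 1 by omega,
            show ¬(i : ℕ) ≤ 1 by omega, show ¬n + i - 1 < n by omega,
            show n + i - 1 - n - 1 = i - 2 by omega]
      _ ≤ _ := ENNReal.ofReal_le_ofReal ?_
    have := pow_le_of_le_one (inv_nonneg.2 (by linarith)) (inv_le_one_of_one_le₀ ha.le)
      (by omega : (i : ℕ) - 2 ≠ 0)
    linarith

variable {M : Mechanism n (2 * n - 1)}

theorem assign_A2_zero_n_eq_false (hn : 2 < n) (hr : 0 < r) (hε : 0 < ε) (hεa : ε < a⁻¹)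
    (hM : Truthful M) (hfin₁ : makespan (M.alloc (A1 n r a)) (A1 n r a) ≠ ⊤)
    (hfin₂ : makespan (M.alloc (A2 n r a ε)) (A2 n r a ε) ≠ ⊤)
    (hsecond : (M.alloc (A1 n r a)).assign ⟨0, by omega⟩ ⟨n + 1, by omega⟩ = true)
    (hfirst : (M.alloc (A1 n r a)).assign ⟨0, by omega⟩ ⟨n, by omega⟩ = false) :
    (M.alloc (A2 n r a ε)).assign ⟨0, by omega⟩ ⟨n, by omega⟩ = false := by
  have hwm := hM.weak_monotonicity (t := A1 n r a) (t' := A2 n r a ε) (i := ⟨0, by omega⟩)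
    (fun k hk => funext fun j => by simp [A2, Fin.ext_iff.not.1 hk])
    {⟨n, by omega⟩, ⟨n + 1, by omega⟩}
    (fun j hj => by simp only [mem_insert, mem_singleton, Fin.ext_iff, not_or] at hj; simp [A2, hj])
    (fun j hj => by
      simp only [mem_insert, mem_singleton] at hj
      rcases hj with rfl | rfl <;> simp [A1, A2])
    (Alloc.machineCost_ne_top_of_makespan_ne_top hfin₁ _)
    (Alloc.machineCost_ne_top_of_makespan_ne_top hfin₂ _)
  have hn₁ : (A1 n r a ⟨0, by omega⟩ ⟨n, by omega⟩).toReal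
      - (A2 n r a ε ⟨0, by omega⟩ ⟨n, by omega⟩).toReal = -ε := by
    simp [A1, A2, hr.le, add_nonneg hr.le hε.le]
  have hn₂ : (A1 n r a ⟨0, by omega⟩ ⟨n + 1, by omega⟩).toReal
      - (A2 n r a ε ⟨0, by omega⟩ ⟨n + 1, by omega⟩).toReal = a⁻¹ - ε := by
    simp [A1, A2, hε.le, inv_nonneg.1 (hε.trans hεa).le]
  rw [sum_pair (by simp [Fin.ext_iff]), hfirst, hsecond, hn₁, hn₂] at hwm
  by_contra hy
  rw [Bool.not_eq_false] at hy
  simp only [hy, Bool.false_eq_true, ↓reduceIte] at hwm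
  split_ifs at hwm <;> linarith

theorem assign_A3_one_eq_true (hn : 2 < n) (hε : 0 < ε) (hM : Truthful M)
    (hfin₂ : makespan (M.alloc (A2 n r a ε)) (A2 n r a ε) ≠ ⊤)
    (hfin₃ : makespan (M.alloc (A3 n r a ε μ)) (A3 n r a ε μ) ≠ ⊤)
    (h₀ : (M.alloc (A2 n r a ε)).assign ⟨0, by omega⟩ ⟨n, by omega⟩ = false) :
    (M.alloc (A3 n r a ε μ)).assign ⟨1, by omega⟩ ⟨1, by omega⟩ = true ∧
      (M.alloc (A3 n r a ε μ)).assign ⟨1, by omega⟩ ⟨n, by omega⟩ = true := by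
  have hdummy₂ : (M.alloc (A2 n r a ε)).assign ⟨1, by omega⟩ ⟨1, by omega⟩ = true :=
    Alloc.assign_of_forall_ne_eq_top hfin₂ fun k hk => by
      simp only [ne_eq, Fin.ext_iff] at hk
      simp only [A2, A1, A0]
      split_ifs <;> first | rfl | omega
  have hdummy₃ : (M.alloc (A3 n r a ε μ)).assign ⟨1, by omega⟩ ⟨1, by omega⟩ = true :=
    Alloc.assign_of_forall_ne_eq_top hfin₃ fun k hk => by
      simp only [ne_eq, Fin.ext_iff] at hk
      simp only [A3, A2, A1, A0]
      split_ifs <;> first | rfl | omega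
  have htask₂ : (M.alloc (A2 n r a ε)).assign ⟨1, by omega⟩ ⟨n, by omega⟩ = true := by
    refine Alloc.assign_of_forall_ne_top hfin₂ fun k hk hfin => Fin.ext ?_
    rcases (by omega : (k : ℕ) = 0 ∨ (k : ℕ) = 1 ∨ 2 ≤ (k : ℕ)) with h | h | h
    · rw [show k = ⟨0, by omega⟩ from Fin.ext h, h₀] at hk; exact absurd hk (by simp)
    · exact h
    · refine absurd ?_ hfin
      simp only [A2, A1, A0]
      split_ifs <;> first | rfl | omega
  have hwm := hM.weak_monotonicity (t := A2 n r a ε) (t' := A3 n r a ε μ) (i := ⟨1, by omega⟩)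
    (fun k hk => funext fun j => by simp [A3, Fin.ext_iff.not.1 hk])
    {⟨1, by omega⟩, ⟨n, by omega⟩}
    (fun j hj => by simp only [mem_insert, mem_singleton, Fin.ext_iff, not_or] at hj; simp [A3, hj])
    (fun j hj => by
      simp only [mem_insert, mem_singleton] at hj
      rcases hj with rfl | rfl <;> simp [A3, A2, A1, A0, show 1 < n by omega, show n ≠ 1 by omega])
    (Alloc.machineCost_ne_top_of_makespan_ne_top hfin₂ _)
    (Alloc.machineCost_ne_top_of_makespan_ne_top hfin₃ _)
  have hpos : 0 < (A2 n r a ε ⟨1, by omega⟩ ⟨n, by omega⟩).toReal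
      - (A3 n r a ε μ ⟨1, by omega⟩ ⟨n, by omega⟩).toReal := by
    simp [A3, A2, A1, A0, show n ≠ 1 by omega, ENNReal.toReal_ofReal', hε]
  rw [sum_pair (by simp [Fin.ext_iff]; omega), hdummy₂, htask₂, hdummy₃] at hwm
  refine ⟨hdummy₃, ?_⟩
  by_contra hz
  simp only [hz, ↓reduceIte, sub_self, zero_mul, sub_zero, one_mul, zero_add] at hwm
  linarith

theorem one_add_max_sub_le_mul {ρ : ℝ} (hn : 2 < n) (hr : 0 < r) (ha : 1 < a)
    (hM : Truthful M) (hρ : ApproxRatioLE M ρ)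
    (hsecond : (M.alloc (A1 n r a)).assign ⟨0, by omega⟩ ⟨n + 1, by omega⟩ = true)
    (hfirst : (M.alloc (A1 n r a)).assign ⟨0, by omega⟩ ⟨n, by omega⟩ = false)
    (hε : 0 < ε) (hεa : ε < a⁻¹) :
    1 + max r a⁻¹ - ε ≤ ρ * (max r a⁻¹ + 2 * ε) := by
  set μ := max r a⁻¹
  have hμ : 0 ≤ μ := hr.le.trans (le_max_left _ _)
  have hfin₁ := hρ.makespan_ne_top _ (Alloc.makespan_ofFun_ne_top (A1_schedule_ne_top r a))
  have hfin₂ := hρ.makespan_ne_top _ (Alloc.makespan_ofFun_ne_top (A2_schedule_ne_top r a ε))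
  have hopt₃ : makespan (M.alloc (A3 n r a ε μ)) (A3 n r a ε μ) ≤
      ENNReal.ofReal ρ * ENNReal.ofReal (μ + 2 * ε) := hρ.makespan_le _ <|
    makespan_schedule_A3_le hn ha hr.le hε.le (le_max_left _ _) (le_max_right _ _)
  have hfin₃ := ne_top_of_le_ne_top
    (ENNReal.mul_ne_top ENNReal.ofReal_ne_top ENNReal.ofReal_ne_top) hopt₃
  obtain ⟨hdummy, htask⟩ := assign_A3_one_eq_true hn hε hM hfin₂ hfin₃
    (assign_A2_zero_n_eq_false hn hr hε hεa hM hfin₁ hfin₂ hsecond hfirst)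
  have hload := (Alloc.add_le_machineCost (by simp [Fin.ext_iff]; omega) hdummy htask).trans
    ((Alloc.machineCost_le_makespan _ _ _).trans hopt₃)
  simp only [A3, and_self, ↓reduceIte, show n ≠ 1 by omega, and_false] at hload
  rw [← ENNReal.ofReal_add hμ (by linarith [inv_lt_one_of_one_lt₀ ha]),
    ← ENNReal.ofReal_mul (by linarith [hρ.1]),
    ENNReal.ofReal_le_ofReal_iff (by nlinarith [hρ.1])] at hload
  linarith

end CaseThree

end

open CaseThree in
/-- **Case 3.**  Let `(a,p)` be a truthful mechanism with finite
approximation ratio `ρ`.  If, on cost matrix `A1`, the mechanism allocates the proper task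
`n+2` (0-based index `n+1`) to machine `1` (index `0`) but does not allocate the proper
task `n+1` (index `n`) to machine `1`, then `ρ ≥ 1 + min {r⁻¹, a}`. -/
theorem case_three_lower_bound (n : ℕ) (hn : 3 ≤ n) (r a : ℝ)
    (hr0 : 0 < r) (ha : 1 < a)
    (M : Mechanism n (2 * n - 1)) (hM : Truthful M)
    (ρ : ℝ) (hρ : ApproxRatioLE M ρ)
    (hsecond : (M.alloc (A1 n r a)).assign ⟨0, by omega⟩ ⟨n + 1, by omega⟩ = true)
    (hfirst : (M.alloc (A1 n r a)).assign ⟨0, by omega⟩ ⟨n, by omega⟩ = false) :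
    1 + min r⁻¹ a ≤ ρ := by
  set μ := max r a⁻¹
  have hμ : 0 < μ := hr0.trans_le (le_max_left _ _)
  have hlim : 1 + μ ≤ ρ * μ :=
    le_of_forall_Ioo_le_add_mul (c := 2 * ρ + 1) (inv_pos.2 (by linarith : 0 < a)) fun ε hε => by
      linarith [one_add_max_sub_le_mul hn hr0 ha hM hρ hsecond hfirst hε.1 hε.2]
  have hinv : min r⁻¹ a ≤ μ⁻¹ := by
    rcases le_total r a⁻¹ with h | h
    · rw [show μ = a⁻¹ from max_eq_right h, inv_inv]; exact min_le_right _ _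
    · rw [show μ = r from max_eq_left h]; exact min_le_left _ _
  have hρμ : 1 + μ⁻¹ ≤ ρ := by
    have := (div_le_iff₀ hμ).2 hlim
    rwa [add_div, div_self hμ.ne', one_div, add_comm] at this
  linarith
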